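/- Reduction correctness for Theorem 1: with the construction from the proof of Theorem 1, the normalizing constant Z := Σ_{x ∈ Bool^k} P(x)·1[P(y = true | x) ≥ 2/3] satisfies Z < 1/2 if and only if there exists a subset S ⊆ {1, …, k} with Σ_{i ∈ S} n_i = Σ_{j ∉ S} n_j. In particular, deciding whether Z < 1/2 decides the number-partition problem for (n_1, …, n_k). -/

import Mathlib

/-- Per-coordinate conditional probability table of the Naive Bayes construction in the
proof of Theorem 1: with `p := (1 - exp (-m)) / (exp m - exp (-m))` and `q := exp m * p`,
`nbTheta m b y` is `P(xᵢ = b | y)`. -/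
noncomputable def nbTheta (m : ℕ) : Bool → Bool → ℝ := fun b y =>
  let p : ℝ := (1 - Real.exp (-(m : ℝ))) / (Real.exp (m : ℝ) - Real.exp (-(m : ℝ)))
  let q : ℝ := Real.exp (m : ℝ) * p
  match b, y with
  | true, true => p
  | false, true => 1 - p
  | true, false => q
  | false, false => 1 - q

/-- The Naive Bayes joint probability mass function
`P (x, y) = (1/2) * ∏ i, θᵢ (xᵢ, y)` on `Bool^k × Bool`. -/
noncomputable def nbJoint {k : ℕ} (n : Fin k → ℕ) (x : Fin k → Bool) (y : Bool) : ℝ :=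
  (1 / 2) * ∏ i, nbTheta (n i) (x i) y

/-- The marginal `P x = P (x, true) + P (x, false)`. -/
noncomputable def nbMarg {k : ℕ} (n : Fin k → ℕ) (x : Fin k → Bool) : ℝ :=
  nbJoint n x true + nbJoint n x false

/-- The posterior `P(y = true | x) = P (x, true) / P x`. -/
noncomputable def nbPost {k : ℕ} (n : Fin k → ℕ) (x : Fin k → Bool) : ℝ :=
  nbJoint n x true / nbMarg n x

/-- The signed partition gap `d x = ∑_{i : xᵢ = false} nᵢ - ∑_{i : xᵢ = true} nᵢ`. -/
noncomputable def nbGap {k : ℕ} (n : Fin k → ℕ) (x : Fin k → Bool) : ℝ :=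
  (∑ i ∈ Finset.univ.filter (fun i => x i = false), (n i : ℝ)) -
    ∑ i ∈ Finset.univ.filter (fun i => x i = true), (n i : ℝ)

section
variable {m : ℕ}

lemma nb_exp_sub_pos (hm : 0 < m) : (0:ℝ) < Real.exp (m:ℝ) - Real.exp (-(m:ℝ)) := by
  have h : (-(m:ℝ)) < (m:ℝ) := by
    have : (0:ℝ) < m := by exact_mod_cast hm
    linarith
  exact sub_pos.2 (Real.exp_lt_exp.2 h)

lemma nb_p_pos (hm : 0 < m) : (0:ℝ) < (1 - Real.exp (-(m : ℝ))) / (Real.exp (m : ℝ) - Real.exp (-(m : ℝ))) := by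
  apply div_pos _ (nb_exp_sub_pos hm)
  have : Real.exp (-(m:ℝ)) < 1 := by
    rw [← Real.exp_zero]
    apply Real.exp_lt_exp.2
    have : (0:ℝ) < m := by exact_mod_cast hm
    linarith
  linarith

lemma nb_one_sub_p (hm : 0 < m) : 1 - (1 - Real.exp (-(m : ℝ))) / (Real.exp (m : ℝ) - Real.exp (-(m : ℝ)))
    = Real.exp (m:ℝ) * ((1 - Real.exp (-(m : ℝ))) / (Real.exp (m : ℝ) - Real.exp (-(m : ℝ)))) := by
  have h := nb_exp_sub_pos hm
  have hE : Real.exp (m:ℝ) * Real.exp (-(m:ℝ)) = 1 := by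
    rw [← Real.exp_add]; simp
  field_simp
  ring_nf
  nlinarith [hE]

lemma nb_theta_pos (hm : 0 < m) (b y : Bool) : 0 < nbTheta m b y := by
  have hp := nb_p_pos hm
  have h1p := nb_one_sub_p hm
  have hE : (0:ℝ) < Real.exp (m:ℝ) := Real.exp_pos _
  have hE1 : (1:ℝ) < Real.exp (m:ℝ) := by
    rw [← Real.exp_zero]; apply Real.exp_lt_exp.2; exact_mod_cast hm
  cases b <;> cases y <;> simp only [nbTheta] <;> nlinarith

lemma nb_theta_flip (hm : 0 < m) (b y : Bool) : nbTheta m b (!y) = nbTheta m (!b) y := by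
  have h1p := nb_one_sub_p hm
  cases b <;> cases y <;> simp only [nbTheta, Bool.not_true, Bool.not_false] <;> linarith

lemma nb_theta_ratio (hm : 0 < m) (b : Bool) :
    nbTheta m b true = Real.exp (if b then -(m:ℝ) else (m:ℝ)) * nbTheta m b false := by
  have h1p := nb_one_sub_p hm
  have hE : Real.exp (-(m:ℝ)) * Real.exp (m:ℝ) = 1 := by rw [← Real.exp_add]; simp
  have h1q : 1 - Real.exp (m:ℝ) * ((1 - Real.exp (-(m : ℝ))) / (Real.exp (m : ℝ) - Real.exp (-(m : ℝ))))
      = (1 - Real.exp (-(m : ℝ))) / (Real.exp (m : ℝ) - Real.exp (-(m : ℝ))) := by linarith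
  cases b <;> simp only [nbTheta, Bool.false_eq_true, if_true, if_false]
  · rw [h1q]; linarith
  · rw [← mul_assoc, hE, one_mul]

lemma nb_theta_sum (y : Bool) : nbTheta m true y + nbTheta m false y = 1 := by
  cases y <;> simp only [nbTheta] <;> ring

end

section
variable {k : ℕ} {n : Fin k → ℕ}

lemma nb_joint_pos (hn : ∀ i, 0 < n i) (x : Fin k → Bool) (y : Bool) :
    0 < nbJoint n x y := by
  unfold nbJoint
  apply mul_pos (by norm_num)
  exact Finset.prod_pos fun i _ => nb_theta_pos (hn i) (x i) y

lemma nb_joint_true (hn : ∀ i, 0 < n i) (x : Fin k → Bool) :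
    nbJoint n x true = Real.exp (nbGap n x) * nbJoint n x false := by
  unfold nbJoint
  have h1 : ∏ i, nbTheta (n i) (x i) true
      = ∏ i, (Real.exp (if x i then -(n i:ℝ) else (n i:ℝ)) * nbTheta (n i) (x i) false) :=
    Finset.prod_congr rfl fun i _ => nb_theta_ratio (hn i) (x i)
  rw [h1, Finset.prod_mul_distrib, ← Real.exp_sum]
  have h2 : ∑ i, (if x i then -(n i:ℝ) else (n i:ℝ)) = nbGap n x := by
    rw [Finset.sum_ite, Finset.sum_neg_distrib, nbGap]
    have h3 : Finset.univ.filter (fun i => ¬ x i = true)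
        = Finset.univ.filter (fun i => x i = false) := by
      apply Finset.filter_congr; intro i _; simp
    rw [h3]; ring
  rw [h2]; ring

lemma nb_marg_eq (hn : ∀ i, 0 < n i) (x : Fin k → Bool) :
    nbMarg n x = (Real.exp (nbGap n x) + 1) * nbJoint n x false := by
  rw [nbMarg, nb_joint_true hn]; ring

lemma nb_post_eq (hn : ∀ i, 0 < n i) (x : Fin k → Bool) :
    nbPost n x = Real.exp (nbGap n x) / (Real.exp (nbGap n x) + 1) := by
  have hJ : nbJoint n x false ≠ 0 := ne_of_gt (nb_joint_pos hn x false)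
  rw [nbPost, nb_joint_true hn, nb_marg_eq hn]
  field_simp

lemma nb_gap_int (x : Fin k → Bool) : ∃ z : ℤ, nbGap n x = (z : ℝ) := by
  refine ⟨(∑ i ∈ Finset.univ.filter (fun i => x i = false), (n i : ℤ)) -
    ∑ i ∈ Finset.univ.filter (fun i => x i = true), (n i : ℤ), ?_⟩
  rw [nbGap]; push_cast; ring

lemma nb_post_cond (hn : ∀ i, 0 < n i) (x : Fin k → Bool) :
    2 / 3 ≤ nbPost n x ↔ 1 ≤ nbGap n x := by
  rw [nb_post_eq hn]
  set d := nbGap n x with hd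
  have hE : (0:ℝ) < Real.exp d := Real.exp_pos d
  rw [div_le_div_iff₀ (by norm_num) (by linarith)]
  constructor
  · intro h
    have h2 : (2:ℝ) ≤ Real.exp d := by linarith
    have hlog : Real.log 2 ≤ d := by
      have := Real.log_le_log (by norm_num) h2
      rwa [Real.log_exp] at this
    obtain ⟨z, hz⟩ := nb_gap_int (n := n) x
    have h0 : (0:ℝ) < d := lt_of_lt_of_le (Real.log_pos (by norm_num)) hlog
    rw [hd, hz] at h0 ⊢
    exact_mod_cast (by exact_mod_cast h0 : 0 < z)
  · intro h
    have hlog : Real.log 2 ≤ d := by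
      have := Real.log_two_lt_d9
      linarith
    have h2 : (2:ℝ) ≤ Real.exp d := by
      calc (2:ℝ) = Real.exp (Real.log 2) := (Real.exp_log (by norm_num)).symm
        _ ≤ Real.exp d := Real.exp_le_exp.2 hlog
    linarith

lemma nb_joint_flip (hn : ∀ i, 0 < n i) (x : Fin k → Bool) (y : Bool) :
    nbJoint n (fun i => !(x i)) y = nbJoint n x (!y) := by
  unfold nbJoint
  congr 1
  exact Finset.prod_congr rfl fun i _ => (nb_theta_flip (hn i) (x i) y).symm

lemma nb_marg_flip (hn : ∀ i, 0 < n i) (x : Fin k → Bool) :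
    nbMarg n (fun i => !(x i)) = nbMarg n x := by
  rw [nbMarg, nbMarg, nb_joint_flip hn, nb_joint_flip hn]
  simp [add_comm]

lemma nb_gap_flip (x : Fin k → Bool) :
    nbGap n (fun i => !(x i)) = - nbGap n x := by
  rw [nbGap, nbGap]
  have h1 : Finset.univ.filter (fun i => (!(x i)) = false)
      = Finset.univ.filter (fun i => x i = true) := by
    apply Finset.filter_congr; intro i _; simp
  have h2 : Finset.univ.filter (fun i => (!(x i)) = true)
      = Finset.univ.filter (fun i => x i = false) := by
    apply Finset.filter_congr; intro i _; simp
  rw [h1, h2]; ring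

lemma nb_marg_pos (hn : ∀ i, 0 < n i) (x : Fin k → Bool) : 0 < nbMarg n x := by
  rw [nb_marg_eq hn]
  have h1 := nb_joint_pos hn x false
  have h2 := Real.exp_pos (nbGap n x)
  nlinarith

lemma nb_total (hn : ∀ i, 0 < n i) : ∑ x : Fin k → Bool, nbMarg n x = 1 := by
  have key : ∀ y : Bool, ∑ x : Fin k → Bool, nbJoint n x y = 1 / 2 := by
    intro y
    unfold nbJoint
    rw [← Finset.mul_sum, ← Fintype.prod_sum (fun i (b : Bool) => nbTheta (n i) b y)]
    have : ∀ i : Fin k, ∑ b : Bool, nbTheta (n i) b y = 1 := by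
      intro i
      rw [Fintype.sum_bool]
      exact nb_theta_sum y
    rw [Finset.prod_congr rfl fun i _ => this i]
    simp
  unfold nbMarg
  rw [Finset.sum_add_distrib, key, key]
  norm_num

end

/-- Reduction correctness for Theorem 1: the normalizing constant
`Z = ∑_x P x * 1[P(y = true | x) ≥ 2/3]` satisfies `Z < 1/2` iff there exists a
subset `S ⊆ {1, …, k}` with `∑_{i ∈ S} nᵢ = ∑_{j ∉ S} nⱼ`, i.e. deciding whether
`Z < 1/2` decides the number-partition problem for `(n₁, …, n_k)`. -/
theorem naive_bayes_partition_reduction (k : ℕ) (hk : 1 ≤ k)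
    (n : Fin k → ℕ) (hn : ∀ i, 0 < n i)
    (Z : ℝ)
    (hZ : Z = ∑ x : Fin k → Bool,
      nbMarg n x * (if 2 / 3 ≤ nbPost n x then (1 : ℝ) else 0)) :
    Z < 1 / 2 ↔ ∃ S : Finset (Fin k), ∑ i ∈ S, n i = ∑ j ∈ Sᶜ, n j := by
  classical
  have hind : ∀ x : Fin k → Bool,
      nbMarg n x * (if 2 / 3 ≤ nbPost n x then (1:ℝ) else 0)
      = if 1 ≤ nbGap n x then nbMarg n x else 0 := by
    intro x
    by_cases h : 1 ≤ nbGap n x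
    · rw [if_pos h, if_pos ((nb_post_cond hn x).2 h), mul_one]
    · rw [if_neg h, if_neg (fun hc => h ((nb_post_cond hn x).1 hc)), mul_zero]
  rw [Finset.sum_congr rfl fun x _ => hind x] at hZ
  -- A = B via the bit-flip involution
  have hinv : Function.Involutive (fun x : Fin k → Bool => fun i => !(x i)) := by
    intro x; funext i; simp
  have hAB : (∑ x : Fin k → Bool, if 1 ≤ nbGap n x then nbMarg n x else 0)
      = ∑ x : Fin k → Bool, if nbGap n x ≤ -1 then nbMarg n x else 0 := by
    apply Fintype.sum_bijective _ hinv.bijective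
    intro x
    rw [nb_gap_flip, nb_marg_flip hn]
    by_cases h : 1 ≤ nbGap n x
    · rw [if_pos h, if_pos (by linarith)]
    · rw [if_neg h, if_neg (by intro hc; exact h (by linarith))]
  -- pointwise three-way split using integrality of the gap
  have hpt : ∀ x : Fin k → Bool, nbMarg n x
      = (if 1 ≤ nbGap n x then nbMarg n x else 0)
        + (if nbGap n x ≤ -1 then nbMarg n x else 0)
        + (if nbGap n x = 0 then nbMarg n x else 0) := by
    intro x
    obtain ⟨z, hz⟩ := nb_gap_int (n := n) x
    rw [hz]
    rcases lt_trichotomy z 0 with h | h | h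
    · have hz1 : z ≤ -1 := by omega
      have h2 : (z:ℝ) ≤ -1 := by exact_mod_cast hz1
      rw [if_neg (by push_cast; linarith), if_pos h2, if_neg (by push_cast; intro hc; linarith)]
      ring
    · subst h
      rw [if_neg (by norm_num), if_neg (by norm_num), if_pos (by norm_num)]
      ring
    · have h1 : (1:ℝ) ≤ (z:ℝ) := by exact_mod_cast h
      rw [if_pos h1, if_neg (by linarith), if_neg (by linarith)]
      ring
  have htot := nb_total hn
  rw [Finset.sum_congr rfl fun x _ => hpt x] at htot
  rw [Finset.sum_add_distrib, Finset.sum_add_distrib, ← hAB, ← hZ] at htot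
  -- htot : Z + Z + C = 1
  set C := ∑ x : Fin k → Bool, (if nbGap n x = 0 then nbMarg n x else 0) with hC
  have hCnonneg : ∀ x ∈ (Finset.univ : Finset (Fin k → Bool)),
      (0:ℝ) ≤ if nbGap n x = 0 then nbMarg n x else 0 := by
    intro x _
    split
    · exact le_of_lt (nb_marg_pos hn x)
    · exact le_refl 0
  have hkey : (0 < C) ↔ ∃ x : Fin k → Bool, nbGap n x = 0 := by
    constructor
    · intro hpos
      by_contra hno
      push_neg at hno
      have : C = 0 := Finset.sum_eq_zero fun x _ => if_neg (hno x)
      rw [this] at hpos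
      exact lt_irrefl 0 hpos
    · rintro ⟨x0, hx0⟩
      refine Finset.sum_pos' hCnonneg ⟨x0, Finset.mem_univ x0, ?_⟩
      rw [if_pos hx0]
      exact nb_marg_pos hn x0
  have hex : (∃ x : Fin k → Bool, nbGap n x = 0)
      ↔ ∃ S : Finset (Fin k), ∑ i ∈ S, n i = ∑ j ∈ Sᶜ, n j := by
    constructor
    · rintro ⟨x, hx⟩
      refine ⟨Finset.univ.filter (fun i => x i = true), ?_⟩
      have hcompl : (Finset.univ.filter (fun i => x i = true))ᶜ
          = Finset.univ.filter (fun i => x i = false) := by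
        ext i; simp
      rw [hcompl]
      rw [nbGap] at hx
      have hcast : ((∑ i ∈ Finset.univ.filter (fun i => x i = true), n i : ℕ) : ℝ)
          = ((∑ i ∈ Finset.univ.filter (fun i => x i = false), n i : ℕ) : ℝ) := by
        push_cast
        linarith
      exact_mod_cast hcast
    · rintro ⟨S, hS⟩
      refine ⟨fun i => decide (i ∈ S), ?_⟩
      rw [nbGap]
      have h1 : Finset.univ.filter (fun i => decide (i ∈ S) = true) = S := by ext i; simp
      have h2 : Finset.univ.filter (fun i => decide (i ∈ S) = false) = Sᶜ := by ext i; simp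
      rw [h1, h2]
      have hcast : ((∑ i ∈ S, n i : ℕ) : ℝ) = ((∑ j ∈ Sᶜ, n j : ℕ) : ℝ) := by
        exact_mod_cast congrArg (fun t : ℕ => (t : ℝ)) hS
      push_cast at hcast
      linarith
  rw [← hex, ← hkey]
  constructor <;> intro <;> linarith
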